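/- arXiv:2307.00405 — 2 statements merged into one kernel-verified Lean document; each statement's English description precedes it below -/
import Mathlib

section
/- Let x_1, …, x_K be vectors in ℝ^d with ‖x_k‖₂ ≤ 1 for all k and with the linear span of {x_1, …, x_K} of dimension at most r. Let λ > 0 and B > 0 be real numbers, and for each k ∈ {1, …, K} set U_k = λ·I_d + ∑_{t<k} x_t x_tᵀ. Then ∑_{k=1}^{K} min{‖x_k‖_{U_k⁻¹}, √B} ≤ √((1 + B)·r·K·log(1 + K/λ)). -/
/-!
Along `U_1, U_2, …` the log-determinant grows by `log (1 + ‖x_k‖²_{U_k⁻¹})` at step `k`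
(matrix determinant lemma), so these increments sum to `log det U_{K+1} - d log λ`. As
`U_{K+1} - λ I` is positive semidefinite of rank at most `r` and trace at most `K`, at most `r`
of its eigenvalues are nonzero, each at most `K`, so the sum is at most `r log (1 + K / λ)`.
Finally `min u B ≤ (1 + B) log (1 + u)`, and Cauchy–Schwarz passes to the sum of square roots.
-/

open Matrix Finset

theorem Real.sum_log_one_add_le {ι : Type*} (s : Finset ι) {a : ι → ℝ} {T : ℝ}
    (ha : ∀ i ∈ s, 0 ≤ a i) (haT : ∀ i ∈ s, a i ≤ T) :
    ∑ i ∈ s, Real.log (1 + a i) ≤ #{i ∈ s | a i ≠ 0} * Real.log (1 + T) := by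
  rw [← sum_filter_of_ne (p := fun i => a i ≠ 0) fun i _ h hai => h (by simp [hai]),
    ← nsmul_eq_mul]
  refine sum_le_card_nsmul _ _ _ fun i hi => ?_
  have hi := (mem_filter.1 hi).1
  exact Real.log_le_log (by linarith [ha i hi]) (by linarith [haT i hi])

theorem Real.min_le_one_add_mul_log_one_add {u B : ℝ} (hu : 0 ≤ u) (hB : 0 ≤ B) :
    min u B ≤ (1 + B) * Real.log (1 + u) := by
  set m := min u B
  have hm : 0 ≤ m := le_min hu hB
  have hlog : m / (1 + m) ≤ Real.log (1 + m) := by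
    have hsub : 1 - (1 + m)⁻¹ = m / (1 + m) := by field_simp; ring
    exact hsub ▸ Real.one_sub_inv_le_log_of_pos (by positivity)
  calc m = (1 + m) * (m / (1 + m)) := by field_simp
    _ ≤ (1 + B) * Real.log (1 + m) := by
        gcongr (1 + ?_) * ?_
        · exact min_le_right u B
    _ ≤ (1 + B) * Real.log (1 + u) := by
        gcongr
        exact min_le_left u B

theorem Real.sum_sqrt_le_sqrt_card_mul_sqrt_sum {ι : Type*} (s : Finset ι) {f : ι → ℝ}
    (hf : ∀ i, 0 ≤ f i) : ∑ i ∈ s, √(f i) ≤ √(#s) * √(∑ i ∈ s, f i) := by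
  simpa using Real.sum_sqrt_mul_sqrt_le s (fun _ => zero_le_one) hf

namespace Matrix

theorem det_add_vecMulVec {n α : Type*} [Fintype n] [DecidableEq n] [CommRing α]
    {A : Matrix n n α} (hA : IsUnit A.det) (u v : n → α) :
    (A + vecMulVec u v).det = A.det * (1 + v ⬝ᵥ A⁻¹ *ᵥ u) := by
  rw [vecMulVec_eq Unit, det_add_replicateCol_mul_replicateRow hA,
    det_unique (1 + replicateRow Unit v * A⁻¹ * replicateCol Unit u), ← replicateRow_vecMul]
  simp [replicateRow_mul_replicateCol_apply, dotProduct_mulVec]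

theorem posSemidef_vecMulVec_self {n : Type*} [Fintype n] (v : n → ℝ) :
    (vecMulVec v v).PosSemidef := by
  simpa using posSemidef_vecMulVec_self_star v

theorem PosDef.dotProduct_inv_mulVec_nonneg {n : Type*} [Fintype n] [DecidableEq n]
    {A : Matrix n n ℝ} (hA : A.PosDef) (v : n → ℝ) : 0 ≤ v ⬝ᵥ A⁻¹ *ᵥ v := by
  simpa using hA.inv.posSemidef.dotProduct_mulVec_nonneg v

theorem PosDef.log_det_add_vecMulVec_self {n : Type*} [Fintype n] [DecidableEq n]
    {A : Matrix n n ℝ} (hA : A.PosDef) (v : n → ℝ) :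
    Real.log (A + vecMulVec v v).det = Real.log A.det + Real.log (1 + v ⬝ᵥ A⁻¹ *ᵥ v) := by
  have hquad := hA.dotProduct_inv_mulVec_nonneg v
  rw [det_add_vecMulVec (isUnit_iff_ne_zero.mpr hA.det_pos.ne'),
    Real.log_mul hA.det_pos.ne' (by positivity)]

theorem IsHermitian.det_smul_one_add {n : Type*} [Fintype n] [DecidableEq n]
    {S : Matrix n n ℝ} (hS : S.IsHermitian) (c : ℝ) :
    (c • 1 + S).det = ∏ i, (c + hS.eigenvalues i) := by
  have h := congrArg (Polynomial.eval (-c)) hS.charpoly_eq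
  rw [eval_charpoly, Polynomial.eval_prod] at h
  simp only [Polynomial.eval_sub, Polynomial.eval_X, Polynomial.eval_C, RCLike.ofReal_real_eq_id,
    id] at h
  have hneg : c • 1 + S = -(scalar n (-c) - S) := by
    rw [scalar_apply, neg_sub, sub_eq_add_neg, ← smul_one_eq_diagonal, neg_smul, neg_neg,
      add_comm]
  rw [hneg, det_neg, h, ← card_univ, ← prod_const, ← prod_mul_distrib]
  exact prod_congr rfl fun i _ => by ring

theorem PosSemidef.log_det_smul_one_add_le {n : Type*} [Fintype n] [DecidableEq n]
    {S : Matrix n n ℝ} (hS : S.PosSemidef) {c : ℝ} (hc : 0 < c) :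
    Real.log (c • 1 + S).det
      ≤ Fintype.card n * Real.log c + S.rank * Real.log (1 + S.trace / c) := by
  set e := hS.isHermitian.eigenvalues
  have he : ∀ i, 0 ≤ e i := hS.eigenvalues_nonneg
  have hsplit : ∀ i, Real.log (c + e i) = Real.log c + Real.log (1 + e i / c) := by
    intro i
    rw [← Real.log_mul hc.ne' (by have := he i; positivity)]
    congr 1
    field_simp
  have hle_trace : ∀ i, e i / c ≤ S.trace / c := by
    intro i
    gcongr
    simpa [hS.isHermitian.trace_eq_sum_eigenvalues] using
      single_le_sum (fun j _ => he j) (mem_univ i)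
  have hrank : (#{i | e i / c ≠ 0} : ℝ) = S.rank := by
    simp [hS.isHermitian.rank_eq_card_non_zero_eigs, Fintype.card_subtype, hc.ne', e]
  rw [hS.isHermitian.det_smul_one_add,
    Real.log_prod fun i _ => (add_pos_of_pos_of_nonneg hc (he i)).ne']
  simp_rw [hsplit]
  rw [sum_add_distrib, sum_const, card_univ, nsmul_eq_mul, ← hrank]
  gcongr
  exact Real.sum_log_one_add_le _ (fun i _ => by have := he i; positivity) fun i _ => hle_trace i

theorem rank_sum_vecMulVec_self_le {n ι K : Type*} [Fintype n] [Field K] (s : Finset ι)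
    (x : ι → n → K) :
    (∑ t ∈ s, vecMulVec (x t) (x t)).rank
      ≤ Module.finrank K (Submodule.span K (Set.range x)) := by
  refine Submodule.finrank_mono ?_
  rintro _ ⟨y, rfl⟩
  rw [mulVecLin_apply, sum_mulVec]
  refine Submodule.sum_mem _ fun t _ => ?_
  rw [vecMulVec_mulVec, op_smul_eq_smul]
  exact Submodule.smul_mem _ _ (Submodule.subset_span ⟨t, rfl⟩)

end Matrix

section DesignMatrix

variable {n : Type*} [DecidableEq n] {K : ℕ}

/-- Indexed by `m : ℕ` rather than `Fin K`, so that `log det` telescopes from `0` to `K`. -/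
def designMatrix (lam : ℝ) (x : Fin K → n → ℝ) (m : ℕ) : Matrix n n ℝ :=
  lam • 1 + ∑ t : Fin K with t.val < m, vecMulVec (x t) (x t)

variable {lam : ℝ} {x : Fin K → n → ℝ}

theorem designMatrix_succ (k : Fin K) :
    designMatrix lam x (k.val + 1) = designMatrix lam x k + vecMulVec (x k) (x k) := by
  have hfilter : univ.filter (fun t : Fin K => t.val < k.val + 1)
      = insert k (univ.filter fun t : Fin K => t.val < k.val) := by
    ext t
    simp only [mem_filter, mem_univ, true_and, mem_insert, Fin.ext_iff]
    omega
  rw [designMatrix, designMatrix, hfilter, sum_insert (by simp), add_comm (vecMulVec _ _),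
    add_assoc]

theorem designMatrix_zero : designMatrix lam x 0 = lam • 1 := by
  simp [designMatrix]

theorem designMatrix_self : designMatrix lam x K = lam • 1 + ∑ t, vecMulVec (x t) (x t) := by
  simp [designMatrix]

variable [Fintype n]

theorem designMatrix_posDef (hlam : 0 < lam) (m : ℕ) : (designMatrix lam x m).PosDef :=
  (PosDef.one.smul hlam).add_posSemidef
    (posSemidef_sum _ fun t _ => posSemidef_vecMulVec_self (x t))

theorem sum_log_one_add_eq_log_det_designMatrix (hlam : 0 < lam) :
    ∑ k, Real.log (1 + x k ⬝ᵥ (designMatrix lam x k)⁻¹ *ᵥ x k)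
      = Real.log (designMatrix lam x K).det - Fintype.card n * Real.log lam := by
  set f : ℕ → ℝ := fun m => Real.log (designMatrix lam x m).det
  have hstep : ∀ k : Fin K,
      Real.log (1 + x k ⬝ᵥ (designMatrix lam x k)⁻¹ *ᵥ x k) = f (k + 1) - f k := by
    intro k
    simp only [f, designMatrix_succ, (designMatrix_posDef hlam k).log_det_add_vecMulVec_self]
    ring
  simp_rw [hstep]
  rw [Fin.sum_univ_eq_sum_range (fun m => f (m + 1) - f m), sum_range_sub]
  simp [f, designMatrix_zero, Real.log_pow]

theorem sum_log_one_add_le_finrank_mul_log (hlam : 0 < lam) (hx : ∀ k, x k ⬝ᵥ x k ≤ 1) :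
    ∑ k, Real.log (1 + x k ⬝ᵥ (designMatrix lam x k)⁻¹ *ᵥ x k)
      ≤ Module.finrank ℝ (Submodule.span ℝ (Set.range x)) * Real.log (1 + K / lam) := by
  set S := ∑ t, vecMulVec (x t) (x t)
  have hS : S.PosSemidef := posSemidef_sum _ fun t _ => posSemidef_vecMulVec_self (x t)
  have htrace : S.trace ≤ K := by
    simpa [S, trace_sum, trace_vecMulVec] using sum_le_sum fun t (_ : t ∈ univ) => hx t
  have hrank : (S.rank : ℝ) ≤ Module.finrank ℝ (Submodule.span ℝ (Set.range x)) := by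
    exact_mod_cast rank_sum_vecMulVec_self_le _ x
  rw [sum_log_one_add_eq_log_det_designMatrix hlam, designMatrix_self, sub_le_iff_le_add']
  refine (hS.log_det_smul_one_add_le hlam).trans ?_
  have htrace_nonneg := hS.trace_nonneg
  gcongr
  exact Real.log_nonneg (le_add_of_nonneg_right (div_nonneg htrace_nonneg hlam.le))

end DesignMatrix

/-- elliptical potential lemma, unsquared version: for unit-bounded
vectors `x_1, …, x_K` of span dimension at most `r`, with
`U_k = λ I + ∑_{t<k} x_t x_tᵀ`,
`∑_{k} min{‖x_k‖_{U_k⁻¹}, √B} ≤ √((1 + B) r K log(1 + K/λ))`. -/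
theorem elliptical_potential_sqrt
    {d r K : ℕ} (lam B : ℝ) (hlam : 0 < lam) (hB : 0 < B)
    (x : Fin K → (Fin d → ℝ))
    (hnorm : ∀ k, Real.sqrt (∑ c, (x k c) ^ 2) ≤ 1)
    (hx : Module.finrank ℝ (Submodule.span ℝ (Set.range x)) ≤ r)
    (U : Fin K → Matrix (Fin d) (Fin d) ℝ)
    (hU : ∀ k, U k = lam • (1 : Matrix (Fin d) (Fin d) ℝ)
        + ∑ t ∈ Finset.univ.filter (fun t => t < k), vecMulVec (x t) (x t)) :
    ∑ k, min (Real.sqrt (x k ⬝ᵥ (U k)⁻¹.mulVec (x k))) (Real.sqrt B)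
      ≤ Real.sqrt ((1 + B) * r * K * Real.log (1 + K / lam)) := by
  have hUk : ∀ k, U k = designMatrix lam x k := hU
  set u : Fin K → ℝ := fun k => x k ⬝ᵥ (designMatrix lam x k)⁻¹ *ᵥ x k
  have hu : ∀ k, 0 ≤ u k := fun k => (designMatrix_posDef hlam k).dotProduct_inv_mulVec_nonneg _
  have hpotential : ∑ k, Real.log (1 + u k) ≤ r * Real.log (1 + K / lam) := by
    refine (sum_log_one_add_le_finrank_mul_log hlam fun k => ?_).trans ?_
    · simpa [dotProduct, sq] using hnorm k
    · gcongr
      exact Real.log_nonneg (le_add_of_nonneg_right (by positivity))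
  calc ∑ k, min (√(x k ⬝ᵥ (U k)⁻¹ *ᵥ x k)) √B = ∑ k, √(min (u k) B) := by
        simp only [hUk, ← Real.sqrt_monotone.map_min, u]
    _ ≤ √K * √(∑ k, min (u k) B) := by
        simpa using Real.sum_sqrt_le_sqrt_card_mul_sqrt_sum univ fun k => le_min (hu k) hB.le
    _ ≤ √K * √((1 + B) * (r * Real.log (1 + K / lam))) := by
        gcongr
        calc ∑ k, min (u k) B ≤ ∑ k, (1 + B) * Real.log (1 + u k) :=
              sum_le_sum fun k _ => Real.min_le_one_add_mul_log_one_add (hu k) hB.le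
          _ ≤ (1 + B) * (r * Real.log (1 + K / lam)) := by
              rw [← mul_sum]
              gcongr
    _ = √((1 + B) * r * K * Real.log (1 + K / lam)) := by
        rw [← Real.sqrt_mul (Nat.cast_nonneg K)]
        ring_nf
end

section
/- Let x_1, …, x_K be vectors in ℝ^d with ‖x_k‖₂ ≤ 1 for all k and with the linear span of {x_1, …, x_K} of dimension at most r, and let λ > 0. Then log det(I_d + (1/λ)·∑_{k=1}^{K} x_k x_kᵀ) ≤ r·log(1 + K/λ). -/
/-!
Write `A = ∑ₖ xₖ xₖᵀ`, a positive semidefinite matrix with eigenvalues `μᵢ ≥ 0`. Then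
`det (I + A/λ) = ∏ᵢ (1 + μᵢ/λ)`, and only the `rank A ≤ r` factors with `μᵢ ≠ 0` differ from `1`.
Each of them is at most `1 + tr A / λ`, and `tr A = ∑ₖ ‖xₖ‖² ≤ K`.
-/

open Matrix Finset

theorem prod_one_add_le_one_add_sum_pow {ι R : Type*} [Fintype ι] [CommSemiring R]
    [PartialOrder R] [IsOrderedRing R] {a : ι → R} (ha : ∀ i, 0 ≤ a i) {s : Finset ι}
    (hs : ∀ i ∉ s, a i = 0) :
    ∏ i, (1 + a i) ≤ (1 + ∑ i, a i) ^ s.card := by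
  calc ∏ i, (1 + a i) = ∏ i ∈ s, (1 + a i) :=
        (prod_subset (subset_univ s) fun i _ hi => by rw [hs i hi, add_zero]).symm
    _ ≤ ∏ _i ∈ s, (1 + ∑ i, a i) :=
        prod_le_prod (fun i _ => add_nonneg zero_le_one (ha i))
          fun i _ => by gcongr; exact single_le_sum (fun j _ => ha j) (mem_univ i)
    _ = (1 + ∑ i, a i) ^ s.card := prod_const _

namespace Matrix

theorem rank_sum_vecMulVec_le {ι m n R : Type*} [Fintype ι] [Finite m] [Fintype n] [Field R]
    (x : ι → m → R) (y : ι → n → R) :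
    (∑ k, vecMulVec (x k) (y k)).rank ≤ Module.finrank R (Submodule.span R (Set.range x)) := by
  rw [rank_eq_finrank_span_cols]
  refine Submodule.finrank_mono (Submodule.span_le.mpr ?_)
  rintro _ ⟨j, rfl⟩
  have hcol : (∑ k, vecMulVec (x k) (y k)).col j = ∑ k, y k j • x k := by
    ext i
    simp [col_apply, sum_apply, vecMulVec_apply, mul_comm]
  rw [hcol]
  exact Submodule.sum_mem _ fun k _ =>
    Submodule.smul_mem _ _ (Submodule.subset_span (Set.mem_range_self k))

variable {𝕜 n : Type*} [RCLike 𝕜] [Fintype n] [DecidableEq n]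

theorem IsHermitian.det_one_add_smul {A : Matrix n n 𝕜} (hA : A.IsHermitian) (c : 𝕜) :
    (1 + c • A).det = ∏ i, (1 + c * hA.eigenvalues i) := by
  set U := hA.eigenvectorUnitary
  have hdiag : Unitary.conjStarAlgAut 𝕜 _ (star U) (1 + c • A) =
      diagonal fun i => 1 + c * hA.eigenvalues i := by
    rw [map_add, map_one, map_smul, hA.conjStarAlgAut_star_eigenvectorUnitary]
    ext i j
    by_cases h : i = j <;> simp [diagonal, h]
  rw [← det_diagonal, ← hdiag, Unitary.conjStarAlgAut_apply, Unitary.coe_star, star_star,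
    det_conj_of_mul_eq_one (Unitary.coe_star_mul_self U) (Unitary.coe_mul_star_self U)]

theorem PosSemidef.det_one_add_smul_le {A : Matrix n n ℝ} (hA : A.PosSemidef) {c : ℝ}
    (hc : 0 ≤ c) : (1 + c • A).det ≤ (1 + c * A.trace) ^ A.rank := by
  have hrank : A.rank = (univ.filter fun i => hA.1.eigenvalues i ≠ 0).card := by
    rw [hA.1.rank_eq_card_non_zero_eigs, Fintype.card_subtype]
  have htrace : c * A.trace = ∑ i, c * hA.1.eigenvalues i := by
    simp [hA.1.trace_eq_sum_eigenvalues, mul_sum]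
  rw [hA.1.det_one_add_smul, hrank, htrace]
  refine prod_one_add_le_one_add_sum_pow (fun i => mul_nonneg hc (hA.eigenvalues_nonneg i))
    fun i hi => ?_
  rw [mem_filter, not_and, not_not] at hi
  rw [hi (mem_univ i), mul_zero]

end Matrix

/-- for unit-bounded vectors `x_1, …, x_K` of span dimension at most `r`,
`log det(I + (1/λ) ∑_k x_k x_kᵀ) ≤ r log(1 + K/λ)`. -/
theorem log_det_le_rank_log
    {d r K : ℕ} (lam : ℝ) (hlam : 0 < lam)
    (x : Fin K → (Fin d → ℝ))
    (hnorm : ∀ k, Real.sqrt (∑ c, (x k c) ^ 2) ≤ 1)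
    (hx : Module.finrank ℝ (Submodule.span ℝ (Set.range x)) ≤ r) :
    Real.log ((1 + (1 / lam) • ∑ k, vecMulVec (x k) (x k) :
        Matrix (Fin d) (Fin d) ℝ).det)
      ≤ r * Real.log (1 + K / lam) := by
  set A : Matrix (Fin d) (Fin d) ℝ := ∑ k, vecMulVec (x k) (x k)
  have hc : 0 ≤ 1 / lam := by positivity
  have hA : A.PosSemidef := posSemidef_sum _ fun k _ => by
    simpa using posSemidef_vecMulVec_self_star (x k)
  have htrace : A.trace ≤ K := by
    calc A.trace = ∑ k, ∑ c, x k c ^ 2 := by simp [A, trace_sum, dotProduct, sq]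
      _ ≤ ∑ _k : Fin K, (1 : ℝ) := sum_le_sum fun k _ => Real.sqrt_le_one.mp (hnorm k)
      _ = K := by simp
  have hrank : A.rank ≤ r := (rank_sum_vecMulVec_le x x).trans hx
  have hdet_pos : 0 < (1 + (1 / lam) • A).det :=
    (PosDef.one.add_posSemidef (hA.smul hc)).det_pos
  have hbase : 1 ≤ 1 + A.trace / lam :=
    le_add_of_nonneg_right (div_nonneg hA.trace_nonneg hlam.le)
  calc Real.log (1 + (1 / lam) • A).det
      ≤ Real.log ((1 + A.trace / lam) ^ A.rank) := by
        refine Real.log_le_log hdet_pos ((hA.det_one_add_smul_le hc).trans_eq ?_)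
        rw [one_div_mul_eq_div]
    _ ≤ Real.log ((1 + K / lam) ^ r) := by
        refine Real.log_le_log (by positivity) ((pow_le_pow_right₀ hbase hrank).trans ?_)
        gcongr
    _ = r * Real.log (1 + K / lam) := Real.log_pow _ _
end
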